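/- Let λ be a positive real number and let m ≤ p be positive integers. The set of pairs (X, Y) of complex matrices, with X of size m×p and Y of size p×m, satisfying J_{λ,m}·S_m·Yᵀ = −X·J_{λ,p}·S_p and Yᵀ·S_p·J_{λ,p} = −S_m·J_{λ,m}·X, consists exactly of the pairs of the form X = [0_{m×(p−m)} | P] (the m×p matrix whose first p−m columns are zero and whose last m columns form P) and Y = −[[P],[0_{(p−m)×m}]] (the p×m matrix whose first m rows form P and whose remaining rows are zero), where P = Σ_{k=0}^{m−1} b_k·T_m^k ranges over all complex polynomial expressions in T_m of degree at most m−1. -/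

import Mathlib

/-!
With `A = S_m X` and `Z = Yᵀ S_p`, the identities `S J S = Jᵀ` and `S² = 1` turn the system
into `Jᵀ Z = -(A J)` and `Z J = -(Jᵀ A)`. Adding them, `D = Z + A` solves `Jᵀ D + D J = 0`;
the map `D ↦ Jᵀ D + D J` is `2λ` plus a nilpotent operator, hence injective, so `Z = -A`.
What is left is `T_m X = X T_p`. A matrix intertwining the two nilpotent blocks is determined
by its last column, and `[0 | P]` with `P` a polynomial in `T_m` realises every last column,
so `X = [0 | P]`; `Y` then follows from the persymmetry `S Pᵀ S = P`.
-/
open Matrix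

noncomputable section

open scoped Classical

/-- The `m × m` upper-triangular Jordan block `J_{λ,m}` with eigenvalue `λ`. -/
def Jb (l : ℂ) (m : ℕ) : Matrix (Fin m) (Fin m) ℂ :=
  Matrix.of fun i j =>
    if (j : ℕ) = (i : ℕ) then l else if (j : ℕ) = (i : ℕ) + 1 then 1 else 0

/-- The `m × m` anti-diagonal matrix `S_m` ( `(i,j)` entry is `1` iff `i + j = m + 1`,
1-based). -/
def Sb (m : ℕ) : Matrix (Fin m) (Fin m) ℂ :=
  Matrix.of fun i j => if (i : ℕ) + (j : ℕ) + 1 = m then 1 else 0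

/-- The size `s(λ,m)` of the matrix `M_{λ,m}`: `m` if `λ ∈ ℝ`, and `2m` otherwise. -/
def sz (l : ℂ) (m : ℕ) : ℕ := if l.im = 0 then m else 2 * m

/-- The matrix `M_{λ,m}`: the Jordan block `J_{λ,m}` if `λ ∈ ℝ`, and the block matrix
`[[0, J_{λ²,m}], [I, 0]]` otherwise. -/
def Mb (l : ℂ) (m : ℕ) : Matrix (Fin (sz l m)) (Fin (sz l m)) ℂ :=
  Matrix.of fun i j =>
    if l.im = 0 then
      (if (j : ℕ) = (i : ℕ) then l else if (j : ℕ) = (i : ℕ) + 1 then 1 else 0)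
    else if (i : ℕ) < m ∧ m ≤ (j : ℕ) then
      (if (j : ℕ) - m = (i : ℕ) then l ^ 2
       else if (j : ℕ) - m = (i : ℕ) + 1 then 1 else 0)
    else if m ≤ (i : ℕ) ∧ (i : ℕ) - m = (j : ℕ) then 1 else 0

/-- The matrix `N_{λ,m}`: `S_m` if `λ ∈ ℝ` and `S_{2m}` otherwise. -/
def Nb (l : ℂ) (m : ℕ) : Matrix (Fin (sz l m)) (Fin (sz l m)) ℂ := Sb (sz l m)

/-- A complex number is normalized if `Re λ ≥ 0` and, when `Re λ = 0`, also `Im λ ≥ 0`. -/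
def Normalized (l : ℂ) : Prop := 0 ≤ l.re ∧ (l.re = 0 → 0 ≤ l.im)

/-- The linear map `B ↦ B * X + X * Bᵀ`. -/
def rmap {n : Type*} [Fintype n] (X : Matrix n n ℂ) :
    Matrix n n ℂ →ₗ[ℂ] Matrix n n ℂ where
  toFun B := B * X + X * Bᵀ
  map_add' B C := by
    simp only [Matrix.add_mul, Matrix.mul_add, Matrix.transpose_add]
    abel
  map_smul' c B := by
    simp only [Matrix.smul_mul, Matrix.mul_smul, Matrix.transpose_smul, smul_add,
      RingHom.id_apply]

/-- The linear map `B ↦ Bᵀ * Y + Y * B`. -/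
def lmap {n : Type*} [Fintype n] (Y : Matrix n n ℂ) :
    Matrix n n ℂ →ₗ[ℂ] Matrix n n ℂ where
  toFun B := Bᵀ * Y + Y * B
  map_add' B C := by
    simp only [Matrix.add_mul, Matrix.mul_add, Matrix.transpose_add]
    abel
  map_smul' c B := by
    simp only [Matrix.smul_mul, Matrix.mul_smul, Matrix.transpose_smul, smul_add,
      RingHom.id_apply]

/-- The subspace `𝒜°` associated with `(H, A)`:  matrices `B` with
`B·A·H⁻¹ + A·H⁻¹·Bᵀ = 0` and `Bᵀ·H·conj(A) + H·conj(A)·B = 0`. -/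
def scriptAo {n : Type*} [Fintype n] [DecidableEq n] (H A : Matrix n n ℂ) :
    Submodule ℂ (Matrix n n ℂ) :=
  LinearMap.ker (rmap (A * H⁻¹)) ⊓ LinearMap.ker (lmap (H * A.map (starRingEnd ℂ)))

/-- The subspace `𝒜` associated with `(H, A)`:  matrices `B` with
`B·A·H⁻¹ + A·H⁻¹·Bᵀ ∈ ℂ·(A·H⁻¹)` and `Bᵀ·H·conj(A) + H·conj(A)·B ∈ ℂ·(H·conj(A))`. -/
def scriptA {n : Type*} [Fintype n] [DecidableEq n] (H A : Matrix n n ℂ) :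
    Submodule ℂ (Matrix n n ℂ) :=
  Submodule.comap (rmap (A * H⁻¹)) (Submodule.span ℂ {A * H⁻¹}) ⊓
    Submodule.comap (lmap (H * A.map (starRingEnd ℂ)))
      (Submodule.span ℂ {H * A.map (starRingEnd ℂ)})


section Reversal

variable {k n : ℕ}

lemma mul_Sb (A : Matrix (Fin k) (Fin n) ℂ) : A * Sb n = A.submatrix id Fin.rev := by
  ext i j
  rw [mul_apply, Finset.sum_eq_single (Fin.rev j)]
  · simp only [Sb, of_apply, submatrix_apply, id, Fin.val_rev]
    rw [if_pos (by omega), mul_one]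
  · intro c _ hc
    simp only [Sb, of_apply]
    rw [if_neg (fun h => hc (by ext; simp only [Fin.val_rev]; omega)), mul_zero]
  · simp

lemma Sb_mul (A : Matrix (Fin n) (Fin k) ℂ) : Sb n * A = A.submatrix Fin.rev id := by
  ext i j
  rw [mul_apply, Finset.sum_eq_single (Fin.rev i)]
  · simp only [Sb, of_apply, submatrix_apply, id, Fin.val_rev]
    rw [if_pos (by omega), one_mul]
  · intro c _ hc
    simp only [Sb, of_apply]
    rw [if_neg (fun h => hc (by ext; simp only [Fin.val_rev]; omega)), zero_mul]
  · simp

lemma Sb_mul_Sb : Sb n * Sb n = 1 := by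
  rw [Sb_mul]
  ext i j
  simp only [submatrix_apply, id, Sb, of_apply, one_apply, Fin.ext_iff, Fin.val_rev]
  split_ifs <;> first | rfl | omega

lemma transpose_Sb : (Sb n)ᵀ = Sb n := by
  ext i j
  simp [Sb, add_comm]

lemma Sb_mul_mul_Sb (A : Matrix (Fin n) (Fin n) ℂ) :
    Sb n * A * Sb n = reindexAlgEquiv ℂ ℂ Fin.revPerm A := by
  rw [mul_Sb, Sb_mul, submatrix_submatrix]
  rfl

lemma reindex_rev_Jb (l : ℂ) : reindexAlgEquiv ℂ ℂ Fin.revPerm (Jb l n) = (Jb l n)ᵀ := by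
  ext i j
  simp only [Jb, coe_reindexAlgEquiv, reindex_apply, Fin.revPerm_symm, submatrix_apply,
    Fin.revPerm_apply, of_apply, Fin.val_rev, transpose_apply]
  split_ifs <;> first | rfl | omega

lemma Sb_mul_Jb_mul_Sb (l : ℂ) : Sb n * Jb l n * Sb n = (Jb l n)ᵀ := by
  rw [Sb_mul_mul_Sb, reindex_rev_Jb]

end Reversal

section Nilpotent

variable {k n : ℕ}

lemma Jb_eq_smul_one_add (l : ℂ) (n : ℕ) : Jb l n = l • 1 + Jb 0 n := by
  ext i j
  by_cases h : i = j
  · subst h; simp [Jb]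
  · simp [Jb, h, Fin.val_ne_of_ne (Ne.symm h)]

lemma Jb_zero_apply (i j : Fin n) : Jb 0 n i j = if (j : ℕ) = i + 1 then 1 else 0 := by
  simp only [Jb, of_apply]
  split_ifs <;> first | rfl | omega

lemma Fin.sum_ite_val_eq {M : Type*} [AddCommMonoid M] (v : ℕ) (f : Fin n → M) :
    (∑ x : Fin n, if (x : ℕ) = v then f x else 0) = if h : v < n then f ⟨v, h⟩ else 0 := by
  split_ifs with h
  · simp_rw [show ∀ x : Fin n, ((x : ℕ) = v ↔ x = ⟨v, h⟩) from
      fun _ => by rw [Fin.ext_iff]]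
    simp
  · exact Finset.sum_eq_zero fun x _ => if_neg (by omega)

lemma Jb_zero_mul_apply (A : Matrix (Fin n) (Fin k) ℂ) (i : Fin n) (j : Fin k) :
    (Jb 0 n * A) i j = if h : (i : ℕ) + 1 < n then A ⟨i + 1, h⟩ j else 0 := by
  simp only [mul_apply, Jb_zero_apply, ite_mul, one_mul, zero_mul]
  exact Fin.sum_ite_val_eq _ _

lemma mul_Jb_zero_apply (A : Matrix (Fin k) (Fin n) ℂ) (i : Fin k) (j : Fin n) :
    (A * Jb 0 n) i j = if h : (j : ℕ) = 0 then 0 else A i ⟨j - 1, by omega⟩ := by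
  simp only [mul_apply, Jb_zero_apply, mul_ite, mul_one, mul_zero]
  split_ifs with h
  · exact Finset.sum_eq_zero fun c _ => if_neg (by omega)
  · simp_rw [show ∀ c : Fin n, ((j : ℕ) = c + 1 ↔ (c : ℕ) = j - 1) by omega]
    rw [Fin.sum_ite_val_eq, dif_pos (by omega)]

lemma Jb_zero_pow_apply (r : ℕ) (i j : Fin n) :
    (Jb 0 n ^ r) i j = if (j : ℕ) = i + r then 1 else 0 := by
  induction r generalizing j with
  | zero => simp [one_apply, Fin.ext_iff, eq_comm]
  | succ r ih =>
    rw [pow_succ, mul_Jb_zero_apply]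
    split_ifs with h0 h1 h1
    · omega
    · rfl
    · rw [ih, if_pos (by simp only; omega)]
    · rw [ih, if_neg (by simp only; omega)]

lemma isNilpotent_Jb_zero : IsNilpotent (Jb 0 n) :=
  ⟨n, by ext i j; rw [Jb_zero_pow_apply, if_neg (by omega)]; rfl⟩

lemma sum_smul_Jb_zero_pow_apply (b : Fin n → ℂ) (i j : Fin n) :
    (∑ r : Fin n, b r • Jb 0 n ^ (r : ℕ)) i j =
      if h : (i : ℕ) ≤ j then b ⟨j - i, by omega⟩ else 0 := by
  simp only [Matrix.sum_apply, Matrix.smul_apply, Jb_zero_pow_apply, smul_eq_mul, mul_ite,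
    mul_one, mul_zero]
  split_ifs with h
  · simp_rw [show ∀ r : Fin n, ((j : ℕ) = i + r ↔ (r : ℕ) = j - i) by omega]
    rw [Fin.sum_ite_val_eq, dif_pos (by omega)]
  · exact Finset.sum_eq_zero fun r _ => if_neg (by omega)

end Nilpotent

section Sylvester

variable {R : Type*} [CommRing R] {ι κ : Type*} [Fintype ι] [DecidableEq ι] [Fintype κ]
  [DecidableEq κ]

theorem Matrix.eq_zero_of_mul_add_mul_eq_zero {A : Matrix ι ι R} {B : Matrix κ κ R} {a b : R}
    (hab : IsUnit (a + b)) (hA : IsNilpotent (A - a • 1)) (hB : IsNilpotent (B - b • 1))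
    {D : Matrix ι κ R} (h : A * D + D * B = 0) : D = 0 := by
  set L : Module.End R (Matrix ι κ R) :=
    mulLeftLinearMap κ R (A - a • 1) + mulRightLinearMap ι R (B - b • 1)
  have hL : IsNilpotent L := by
    refine Commute.isNilpotent_add ?_ ?_ ?_
    · exact LinearMap.ext fun C => (Matrix.mul_assoc _ C _).symm
    · obtain ⟨k, hk⟩ := hA
      exact ⟨k, by rw [pow_mulLeftLinearMap, hk, mulLeftLinearMap_zero_eq_zero]⟩
    · obtain ⟨k, hk⟩ := hB
      exact ⟨k, by rw [pow_mulRightLinearMap, hk, mulRightLinearMap_zero_eq_zero]⟩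
  have hunit : IsUnit (algebraMap R (Module.End R (Matrix ι κ R)) (a + b) + L) :=
    hL.isUnit_add_left_of_commute (hab.map _) (Algebra.commutes _ _).symm
  have hD : (algebraMap R (Module.End R (Matrix ι κ R)) (a + b) + L) D = 0 := by
    rw [← h]
    simp only [L, LinearMap.add_apply, Module.algebraMap_end_apply, mulLeftLinearMap_apply,
      mulRightLinearMap_apply, Matrix.sub_mul, Matrix.mul_sub, Matrix.smul_mul, Matrix.mul_smul,
      Matrix.one_mul, Matrix.mul_one, add_smul]
    abel
  exact (Module.End.isUnit_iff _).mp hunit |>.injective (hD.trans (map_zero _).symm)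

theorem Matrix.coupled_sylvester_iff {M : Matrix ι ι R} {N : Matrix κ κ R} {a : R}
    (ha : IsUnit (a + a)) (hM : IsNilpotent (M - a • 1)) (hN : IsNilpotent (N - a • 1))
    (A Z : Matrix ι κ R) :
    (M * Z = -(A * N) ∧ Z * N = -(M * A)) ↔ (M * A = A * N ∧ Z = -A) := by
  constructor
  · rintro ⟨h₁, h₂⟩
    have hZ : Z = -A := by
      refine eq_neg_of_add_eq_zero_left (eq_zero_of_mul_add_mul_eq_zero ha hM hN ?_)
      rw [Matrix.mul_add, Matrix.add_mul, h₁, h₂]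
      abel
    subst hZ
    refine ⟨?_, rfl⟩
    simpa only [Matrix.mul_neg, neg_inj] using h₁
  · rintro ⟨h, rfl⟩
    simp only [Matrix.mul_neg, Matrix.neg_mul, h, and_self]

end Sylvester

section System

variable {k m n p : ℕ}

lemma Sb_mul_inj {M N : Matrix (Fin n) (Fin k) ℂ} : Sb n * M = Sb n * N ↔ M = N := by
  refine ⟨fun h => ?_, congrArg _⟩
  simpa only [← Matrix.mul_assoc, Sb_mul_Sb, Matrix.one_mul] using congrArg (Sb n * ·) h

lemma mul_Sb_inj {M N : Matrix (Fin k) (Fin n) ℂ} : M * Sb n = N * Sb n ↔ M = N := by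
  refine ⟨fun h => ?_, congrArg (· * Sb n)⟩
  simpa only [Matrix.mul_assoc, Sb_mul_Sb, Matrix.mul_one] using congrArg (· * Sb n) h

lemma Jb_mul_Sb (l : ℂ) : Jb l n * Sb n = Sb n * (Jb l n)ᵀ := by
  rw [← Sb_mul_inj, ← Matrix.mul_assoc, ← Matrix.mul_assoc, Sb_mul_mul_Sb, Sb_mul_Sb,
    Matrix.one_mul, reindex_rev_Jb]

lemma transpose_Jb_eq_smul_one_add (l : ℂ) :
    (Jb l n)ᵀ = l • 1 + (Jb 0 n)ᵀ := by
  rw [Jb_eq_smul_one_add l n, transpose_add, transpose_smul, transpose_one]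

theorem jordan_system_iff {l : ℂ} (hl : l ≠ 0) (X : Matrix (Fin m) (Fin p) ℂ)
    (Y : Matrix (Fin p) (Fin m) ℂ) :
    (Jb l m * Sb m * Yᵀ = -(X * (Jb l p * Sb p)) ∧
      Yᵀ * (Sb p * Jb l p) = -(Sb m * Jb l m * X)) ↔
    (Jb 0 m * X = X * Jb 0 p ∧ Yᵀ = -(Sb m * X * Sb p)) := by
  obtain ⟨A, rfl⟩ : ∃ A, X = Sb m * A :=
    ⟨Sb m * X, by rw [← Matrix.mul_assoc, Sb_mul_Sb, Matrix.one_mul]⟩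
  obtain ⟨Z, hZ⟩ : ∃ Z, Yᵀ = Z * Sb p :=
    ⟨Yᵀ * Sb p, by rw [Matrix.mul_assoc, Sb_mul_Sb, Matrix.mul_one]⟩
  have hnil (n : ℕ) : IsNilpotent ((Jb l n)ᵀ - l • 1) ∧ IsNilpotent (Jb l n - l • 1) := by
    rw [transpose_Jb_eq_smul_one_add, Jb_eq_smul_one_add l n, add_sub_cancel_left,
      add_sub_cancel_left, isNilpotent_transpose_iff]
    exact ⟨isNilpotent_Jb_zero, isNilpotent_Jb_zero⟩
  have e₁ : Jb l m * Sb m * (Z * Sb p) = -(Sb m * A * (Jb l p * Sb p)) ↔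
      (Jb l m)ᵀ * Z = -(A * Jb l p) := by
    conv_rhs => rw [← mul_Sb_inj (n := p), ← Sb_mul_inj (n := m)]
    rw [Jb_mul_Sb]
    simp only [Matrix.mul_assoc, Matrix.mul_neg, Matrix.neg_mul]
  have e₂ : Z * Sb p * (Sb p * Jb l p) = -(Sb m * Jb l m * (Sb m * A)) ↔
      Z * Jb l p = -((Jb l m)ᵀ * A) := by
    rw [Matrix.mul_assoc Z, ← Matrix.mul_assoc (Sb p), Sb_mul_Sb, Matrix.one_mul,
      ← Matrix.mul_assoc, Sb_mul_Jb_mul_Sb]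
  have e₃ : (Jb l m)ᵀ * A = A * Jb l p ↔ Jb 0 m * (Sb m * A) = Sb m * A * Jb 0 p := by
    rw [transpose_Jb_eq_smul_one_add, Jb_eq_smul_one_add l p, Matrix.add_mul, Matrix.mul_add,
      Matrix.smul_mul, Matrix.mul_smul, Matrix.one_mul, Matrix.mul_one, add_right_inj,
      ← Matrix.mul_assoc, Jb_mul_Sb, Matrix.mul_assoc, Matrix.mul_assoc, Sb_mul_inj]
  have e₄ : Z = -A ↔ Z * Sb p = -(Sb m * (Sb m * A) * Sb p) := by
    rw [← Matrix.mul_assoc (Sb m), Sb_mul_Sb, Matrix.one_mul, ← Matrix.neg_mul, mul_Sb_inj]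
  rw [hZ, e₁, e₂, Matrix.coupled_sylvester_iff _ (hnil m).1 (hnil p).2, e₃, e₄]
  exact isUnit_iff_ne_zero.mpr (by simpa [← two_mul] using hl)

end System

section Commutant

variable {k m p : ℕ}

/- The block matrices `[0 | I_m]` and `[[I_m], [0]]`: thus `[0 | P] = P * zeroIdBlock m p` and
`[[P], [0]] = idZeroBlock p m * P`. -/
def zeroIdBlock (m p : ℕ) : Matrix (Fin m) (Fin p) ℂ :=
  of fun i j => if (j : ℕ) = i + (p - m) then 1 else 0

def idZeroBlock (p m : ℕ) : Matrix (Fin p) (Fin m) ℂ :=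
  of fun i j => if (i : ℕ) = j then 1 else 0

lemma mul_zeroIdBlock_apply (A : Matrix (Fin k) (Fin m) ℂ) (i : Fin k) (j : Fin p) :
    (A * zeroIdBlock m p) i j =
      if _h : (j : ℕ) < p - m then 0 else A i ⟨j - (p - m), by omega⟩ := by
  simp only [mul_apply, zeroIdBlock, of_apply, mul_ite, mul_one, mul_zero]
  split_ifs with h
  · exact Finset.sum_eq_zero fun c _ => if_neg (by omega)
  · simp_rw [show ∀ c : Fin m, ((j : ℕ) = c + (p - m) ↔ (c : ℕ) = j - (p - m)) by omega]
    rw [Fin.sum_ite_val_eq, dif_pos (by omega)]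

lemma idZeroBlock_mul_apply (A : Matrix (Fin m) (Fin k) ℂ) (i : Fin p) (j : Fin k) :
    (idZeroBlock p m * A) i j = if h : (i : ℕ) < m then A ⟨i, h⟩ j else 0 := by
  simp only [mul_apply, idZeroBlock, of_apply, ite_mul, one_mul, zero_mul, eq_comm (a := (i : ℕ))]
  exact Fin.sum_ite_val_eq _ _

lemma Jb_zero_mul_zeroIdBlock : Jb 0 m * zeroIdBlock m p = zeroIdBlock m p * Jb 0 p := by
  ext i j
  rw [Jb_zero_mul_apply, mul_Jb_zero_apply]
  simp only [zeroIdBlock, of_apply]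
  split_ifs <;> first | rfl | omega

lemma Sb_mul_transpose_zeroIdBlock_mul_Sb (hmp : m ≤ p) :
    Sb p * (zeroIdBlock m p)ᵀ * Sb m = idZeroBlock p m := by
  ext i j
  rw [mul_Sb, Sb_mul]
  simp only [submatrix_apply, id, transpose_apply, zeroIdBlock, idZeroBlock, of_apply, Fin.val_rev]
  split_ifs <;> first | rfl | omega

lemma commute_Jb_zero_sum_smul_pow (b : Fin m → ℂ) :
    Commute (Jb 0 m) (∑ r : Fin m, b r • Jb 0 m ^ (r : ℕ)) :=
  Commute.sum_right _ _ _ fun _ _ => ((Commute.refl _).pow_right _).smul_right _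

lemma Sb_mul_transpose_sum_smul_pow_mul_Sb (b : Fin m → ℂ) :
    Sb m * (∑ r : Fin m, b r • Jb 0 m ^ (r : ℕ))ᵀ * Sb m =
      ∑ r : Fin m, b r • Jb 0 m ^ (r : ℕ) := by
  have hT : reindexAlgEquiv ℂ ℂ Fin.revPerm (Jb 0 m)ᵀ = Jb 0 m := by
    rw [coe_reindexAlgEquiv, ← transpose_reindex, ← coe_reindexAlgEquiv ℂ ℂ, reindex_rev_Jb,
      transpose_transpose]
  simp only [Sb_mul_mul_Sb, transpose_sum, transpose_smul, transpose_pow, map_sum, map_smul,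
    map_pow, hT]

lemma eq_zero_of_Jb_zero_mul_eq_mul_Jb_zero {W : Matrix (Fin m) (Fin p) ℂ}
    (hW : Jb 0 m * W = W * Jb 0 p) (hlast : ∀ i (j : Fin p), (j : ℕ) + 1 = p → W i j = 0) :
    W = 0 := by
  suffices h : ∀ d i (j : Fin p), (j : ℕ) + d + 1 = p → W i j = 0 from
    ext fun i j => h (p - j - 1) i j (by omega)
  intro d
  induction d with
  | zero => exact hlast
  | succ d ih =>
    intro i j hj
    have hshift : W i j = (Jb 0 m * W) i ⟨j + 1, by omega⟩ := by
      rw [hW, mul_Jb_zero_apply, dif_neg (Nat.succ_ne_zero _)]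
      rfl
    rw [hshift, Jb_zero_mul_apply]
    split_ifs
    · exact ih _ _ (by simp only; omega)
    · rfl

theorem Jb_zero_mul_eq_mul_Jb_zero_iff (hmp : m ≤ p) (X : Matrix (Fin m) (Fin p) ℂ) :
    Jb 0 m * X = X * Jb 0 p ↔
      ∃ b : Fin m → ℂ, X = (∑ r : Fin m, b r • Jb 0 m ^ (r : ℕ)) * zeroIdBlock m p := by
  constructor
  · intro hX
    refine ⟨fun r => X ⟨m - 1 - r, by omega⟩ ⟨p - 1, by have := r.isLt; omega⟩, ?_⟩
    rw [← sub_eq_zero]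
    refine eq_zero_of_Jb_zero_mul_eq_mul_Jb_zero ?_ fun i j hj => ?_
    · rw [Matrix.mul_sub, Matrix.sub_mul, hX, ← Matrix.mul_assoc,
        (commute_Jb_zero_sum_smul_pow _).eq, Matrix.mul_assoc, Jb_zero_mul_zeroIdBlock,
        Matrix.mul_assoc]
    · have := i.isLt
      rw [Matrix.sub_apply, mul_zeroIdBlock_apply, dif_neg (by omega), sum_smul_Jb_zero_pow_apply,
        dif_pos (by simp only; omega), sub_eq_zero]
      congr 1 <;> ext <;> simp only <;> omega
  · rintro ⟨b, rfl⟩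
    rw [← Matrix.mul_assoc, (commute_Jb_zero_sum_smul_pow _).eq, Matrix.mul_assoc,
      Jb_zero_mul_zeroIdBlock, Matrix.mul_assoc]

lemma transpose_eq_neg_Sb_mul_mul_Sb_iff (hmp : m ≤ p) (b : Fin m → ℂ)
    (Y : Matrix (Fin p) (Fin m) ℂ) :
    Yᵀ = -(Sb m * ((∑ r : Fin m, b r • Jb 0 m ^ (r : ℕ)) * zeroIdBlock m p) * Sb p) ↔
      Y = -(idZeroBlock p m * ∑ r : Fin m, b r • Jb 0 m ^ (r : ℕ)) := by
  have hP := Sb_mul_transpose_sum_smul_pow_mul_Sb b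
  set P := ∑ r : Fin m, b r • Jb 0 m ^ (r : ℕ)
  have key : (Sb m * (P * zeroIdBlock m p) * Sb p)ᵀ = idZeroBlock p m * P := by
    rw [← Sb_mul_transpose_zeroIdBlock_mul_Sb hmp]
    conv_rhs => rw [← hP]
    simp only [transpose_mul, transpose_Sb, Matrix.mul_assoc]
    rw [← Matrix.mul_assoc (Sb m) (Sb m), Sb_mul_Sb, Matrix.one_mul]
  rw [← key, ← transpose_neg, ← transpose_inj, transpose_transpose]

end Commutant

/-- For `λ > 0` and `m ≤ p`, the pairs `(X, Y)` solving
`J_{λ,m}·S_m·Yᵀ = −X·J_{λ,p}·S_p` and `Yᵀ·S_p·J_{λ,p} = −S_m·J_{λ,m}·X` are exactly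
those of the form `X = [0 | P]`, `Y = −[[P],[0]]` with `P` a polynomial in `T_m` of
degree at most `m − 1`. -/
theorem stmt4 (l : ℝ) (hl : 0 < l) (m p : ℕ) (hmp : m ≤ p)
    (X : Matrix (Fin m) (Fin p) ℂ) (Y : Matrix (Fin p) (Fin m) ℂ) :
    (Jb (l : ℂ) m * Sb m * Yᵀ = -(X * (Jb (l : ℂ) p * Sb p)) ∧
      Yᵀ * (Sb p * Jb (l : ℂ) p) = -(Sb m * Jb (l : ℂ) m * X)) ↔
    ∃ b : Fin m → ℂ,
      (∀ (i : Fin m) (j : Fin p), X i j =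
        if _h : (j : ℕ) < p - m then 0
        else (∑ k : Fin m, b k • Jb 0 m ^ (k : ℕ)) i
          ⟨(j : ℕ) - (p - m), by have := j.isLt; omega⟩) ∧
      (∀ (i : Fin p) (j : Fin m), Y i j =
        if h : (i : ℕ) < m then
          -((∑ k : Fin m, b k • Jb 0 m ^ (k : ℕ)) ⟨(i : ℕ), h⟩ j)
        else 0) := by
  have hY (b : Fin m → ℂ) (i : Fin p) (j : Fin m) :
      (-(idZeroBlock p m * ∑ k : Fin m, b k • Jb 0 m ^ (k : ℕ))) i j =
        if h : (i : ℕ) < m then -((∑ k : Fin m, b k • Jb 0 m ^ (k : ℕ)) ⟨i, h⟩ j)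
        else 0 := by
    rw [neg_apply, idZeroBlock_mul_apply, apply_dite Neg.neg, neg_zero]
  rw [jordan_system_iff (Complex.ofReal_ne_zero.mpr hl.ne'), Jb_zero_mul_eq_mul_Jb_zero_iff hmp]
  constructor
  · rintro ⟨⟨b, rfl⟩, hYt⟩
    rw [transpose_eq_neg_Sb_mul_mul_Sb_iff hmp] at hYt
    exact ⟨b, mul_zeroIdBlock_apply _, fun i j => hYt ▸ hY b i j⟩
  · rintro ⟨b, hXb, hYb⟩
    obtain rfl : X = (∑ k : Fin m, b k • Jb 0 m ^ (k : ℕ)) * zeroIdBlock m p :=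
      ext fun i j => (hXb i j).trans (mul_zeroIdBlock_apply _ i j).symm
    rw [transpose_eq_neg_Sb_mul_mul_Sb_iff hmp]
    exact ⟨⟨b, rfl⟩, ext fun i j => (hYb i j).trans (hY b i j).symm⟩
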